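/- Let n ≥ 1 and 1 ≤ ω ≤ ϖ be integers with 2ϖ−1 ≤ n, and let ν be a divisor of n with ν ≥ ϖ + ω − 1. Let m ∈ M_ω, and let c ∈ ℝⁿ satisfy: |c_j| ≤ 1 for all j, |c_j| = 1 for at least one j, and the DFT of |c| is supported on multiples of ν, i.e. Σ_{j=0}^{n−1} |c_j|·exp(−2πi·j·k/n) = 0 for every k ∈ {0,…,n−1} not divisible by ν. Set s = m ∘ c (componentwise product). Then the AP-B sequence m_0 = |s|, m_{i+1} = P_{≥|s|}(P_ϖ m_i) converges to m. -/

import Mathlib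

/-!
Every iterate has the form `mᵢ = m ∘ dᵢ` with `d₀ = |c|` and `dᵢ₊₁ = max (𝔼 dᵢ) |c|`.
A spectrum supported on multiples of `ν` means `n / ν`-periodicity, so `|c|` and with it every
`dᵢ` is `n / ν`-periodic. Multiplying the `ω`-bandlimited `m` by such a `d` only adds copies of
`m̂` shifted by nonzero multiples of `ν ≥ ϖ + ω - 1`, which miss `K_ϖ`; hence
`P_ϖ (m ∘ d) = (𝔼 d) • m`, and `P_{≥|s|}` turns this into `m ∘ max (𝔼 d) |c|`.
As `|c| ≤ 1` with equality at some `j₀`, `1 - 𝔼 dᵢ` shrinks by the factor `1 - 1/n` at each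
step, so `dᵢ → 1` and `mᵢ → m`.
-/

open scoped BigOperators

noncomputable section

/-- Low-frequency index set `K_ω ⊆ {0,…,n−1}`. -/
def Kset (n ω : ℕ) : Set (Fin n) := {k | (k : ℕ) ≤ ω - 1 ∨ n - ω + 1 ≤ (k : ℕ)}

/-- The set of ω-bandlimited real vectors `S_ω`. -/
def Sband (n ω : ℕ) : Set (EuclideanSpace ℝ (Fin n)) :=
  {x | ∀ k : Fin n, k ∉ Kset n ω →
    ∑ j : Fin n, (x j : ℂ) *
      Complex.exp (-(2 * (Real.pi : ℂ) * Complex.I * ((j : ℕ) : ℂ) * ((k : ℕ) : ℂ)) / (n : ℂ)) = 0}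

/-- The constraint set `S_{≥|s|}`. -/
def Sgeq (n : ℕ) (s : EuclideanSpace ℝ (Fin n)) : Set (EuclideanSpace ℝ (Fin n)) :=
  {x | ∀ j, |s j| ≤ x j}

/-- The metric projection onto `S_{≥|s|}`: componentwise `max(z_j, |s_j|)`. -/
def Pgeq (n : ℕ) (s z : EuclideanSpace ℝ (Fin n)) : EuclideanSpace ℝ (Fin n) :=
  (WithLp.equiv 2 (Fin n → ℝ)).symm (fun j => max (z j) |s j|)

/-- The rectangular low-pass filter `P_ϖ` (the orthogonal projection onto `S_ϖ`):
`(P_ϖ z)_j = (1/n)·Σ_{k∈K_ϖ} Σ_{l} z_l·cos(2πk(j−l)/n)`. -/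
def Pband (n ϖ : ℕ) (z : EuclideanSpace ℝ (Fin n)) : EuclideanSpace ℝ (Fin n) :=
  (WithLp.equiv 2 (Fin n → ℝ)).symm (fun j =>
    (1 / (n : ℝ)) *
      ∑ k ∈ Finset.univ.filter (fun k : Fin n => (k : ℕ) ≤ ϖ - 1 ∨ n - ϖ + 1 ≤ (k : ℕ)),
        ∑ l : Fin n, z l * Real.cos (2 * Real.pi * (k : ℕ) * (((j : ℕ) : ℝ) - ((l : ℕ) : ℝ)) / (n : ℝ)))

/-- The set of nonnegative ω-bandlimited vectors `M_ω`. -/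
def Mmod (n ω : ℕ) : Set (EuclideanSpace ℝ (Fin n)) :=
  {x ∈ Sband n ω | ∀ j, 0 ≤ x j}

open Finset Complex Filter Topology

namespace APB

section Envelope

variable {ι : Type*} [Fintype ι] {a : ι → ℝ}

def envelope (a : ι → ℝ) : ℕ → ι → ℝ
  | 0 => a
  | i + 1 => fun j => max (𝔼 l, envelope a i l) (a j)

lemma envelope_succ_apply (i : ℕ) (j : ι) :
    envelope a (i + 1) j = max (𝔼 l, envelope a i l) (a j) := rfl

lemma envelope_comp {σ : ι → ι} (ha : ∀ j, a (σ j) = a j) (i : ℕ) (j : ι) :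
    envelope a i (σ j) = envelope a i j := by
  cases i with
  | zero => exact ha j
  | succ i => rw [envelope_succ_apply, envelope_succ_apply, ha]

variable [Nonempty ι]

lemma one_sub_inv_card_nonneg : 0 ≤ 1 - (Fintype.card ι : ℝ)⁻¹ :=
  sub_nonneg.2 (inv_le_one_of_one_le₀ (Nat.one_le_cast.2 Fintype.card_pos))

lemma envelope_mem_Icc (ha : ∀ j, a j ≤ 1) (i : ℕ) (j : ι) :
    envelope a i j ∈ Set.Icc (a j) 1 := by
  induction i generalizing j with
  | zero => exact ⟨le_rfl, ha j⟩
  | succ i ih =>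
    rw [envelope_succ_apply]
    exact ⟨le_max_right _ _, max_le (expect_le univ_nonempty fun l _ => (ih l).2) (ha j)⟩

lemma expect_envelope_le_one (ha : ∀ j, a j ≤ 1) (i : ℕ) : 𝔼 l, envelope a i l ≤ 1 :=
  expect_le univ_nonempty fun l _ => (envelope_mem_Icc ha i l).2

lemma sum_one_sub_max_le {μ : ℝ} (hμ : μ ≤ 1) {i₀ : ι} (ha₀ : a i₀ = 1) :
    ∑ j, (1 - max μ (a j)) ≤ (Fintype.card ι - 1) * (1 - μ) := by
  classical
  rw [← add_sum_erase univ _ (mem_univ i₀), ha₀, max_eq_right hμ, sub_self, zero_add]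
  calc ∑ j ∈ univ.erase i₀, (1 - max μ (a j))
      ≤ ∑ j ∈ univ.erase i₀, (1 - μ) := sum_le_sum fun j _ => by linarith [le_max_left μ (a j)]
    _ = (Fintype.card ι - 1) * (1 - μ) := by
        rw [sum_const, card_erase_of_mem (mem_univ _), card_univ, nsmul_eq_mul,
          Nat.cast_sub Fintype.card_pos]
        simp

lemma one_sub_expect_envelope_le (ha0 : ∀ j, 0 ≤ a j) (ha1 : ∀ j, a j ≤ 1) {i₀ : ι}
    (ha₀ : a i₀ = 1) (i : ℕ) :
    1 - 𝔼 l, envelope a i l ≤ (1 - (Fintype.card ι : ℝ)⁻¹) ^ i := by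
  induction i with
  | zero =>
    simp only [pow_zero, envelope, sub_le_self_iff]
    exact expect_nonneg fun l _ => ha0 l
  | succ i ih =>
    have hN : (0 : ℝ) < Fintype.card ι := Nat.cast_pos.2 Fintype.card_pos
    calc 1 - 𝔼 l, envelope a (i + 1) l
        = (∑ j, (1 - max (𝔼 l, envelope a i l) (a j))) / Fintype.card ι := by
          simp only [envelope_succ_apply, expect_eq_sum_div_card, sum_sub_distrib, card_univ]
          field_simp
          simp
      _ ≤ (Fintype.card ι - 1) * (1 - 𝔼 l, envelope a i l) / Fintype.card ι :=
          div_le_div_of_nonneg_right (sum_one_sub_max_le (expect_envelope_le_one ha1 i) ha₀) hN.le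
      _ = (1 - (Fintype.card ι : ℝ)⁻¹) * (1 - 𝔼 l, envelope a i l) := by
          field_simp
      _ ≤ (1 - (Fintype.card ι : ℝ)⁻¹) ^ (i + 1) := by
          rw [pow_succ']
          exact mul_le_mul_of_nonneg_left ih one_sub_inv_card_nonneg

lemma tendsto_envelope (ha0 : ∀ j, 0 ≤ a j) (ha1 : ∀ j, a j ≤ 1) {i₀ : ι} (ha₀ : a i₀ = 1)
    (j : ι) : Tendsto (fun i => envelope a i j) atTop (𝓝 1) := by
  have hq : 1 - (Fintype.card ι : ℝ)⁻¹ < 1 :=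
    sub_lt_self _ (inv_pos.2 (Nat.cast_pos.2 Fintype.card_pos))
  have hexp : Tendsto (fun i => 𝔼 l, envelope a i l) atTop (𝓝 1) := by
    have hlow := (tendsto_pow_atTop_nhds_zero_of_lt_one one_sub_inv_card_nonneg hq).const_sub 1
    rw [sub_zero] at hlow
    refine tendsto_of_tendsto_of_tendsto_of_le_of_le hlow tendsto_const_nhds
      (fun i => ?_) (expect_envelope_le_one ha1)
    linarith [one_sub_expect_envelope_le ha0 ha1 ha₀ i]
  rw [← tendsto_add_atTop_iff_nat 1]
  exact tendsto_of_tendsto_of_tendsto_of_le_of_le hexp tendsto_const_nhds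
    (fun i => le_max_left _ _) (fun i => (envelope_mem_Icc ha1 (i + 1) j).2)

end Envelope

variable {n : ℕ}

def expFrac (n : ℕ) (r : ℤ) : ℂ := exp (2 * Real.pi * I * r / n)

lemma expFrac_eq_zpow (r : ℤ) : expFrac n r = exp (2 * Real.pi * I / n) ^ r := by
  rw [expFrac, ← exp_int_mul]
  ring_nf

lemma expFrac_add (r s : ℤ) : expFrac n (r + s) = expFrac n r * expFrac n s := by
  rw [expFrac, expFrac, expFrac, ← exp_add]
  push_cast
  ring_nf

lemma expFrac_re (r : ℤ) : (expFrac n r).re = Real.cos (2 * Real.pi * r / n) := by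
  rw [expFrac, show (2 * Real.pi * I * r / n : ℂ) = ((2 * Real.pi * r / n : ℝ) : ℂ) * I by
    push_cast; ring, exp_ofReal_mul_I_re]

/-- Frequencies range over all of `ℤ`, so that shifted frequencies `k - t` need no reduction
mod `n` (see `dft_congr`). -/
def dft (n : ℕ) (z : Fin n → ℝ) (k : ℤ) : ℂ := ∑ j : Fin n, (z j : ℂ) * expFrac n (-(j * k))

lemma dft_zero (z : Fin n → ℝ) : dft n z 0 = ((∑ j, z j : ℝ) : ℂ) := by
  simp [dft, expFrac]

lemma sum_mul_exp_eq_dft (z : Fin n → ℝ) (k : Fin n) :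
    ∑ j : Fin n, (z j : ℂ) *
      exp (-(2 * (Real.pi : ℂ) * I * ((j : ℕ) : ℂ) * ((k : ℕ) : ℂ)) / (n : ℂ)) = dft n z k := by
  refine sum_congr rfl fun j _ => ?_
  rw [expFrac]
  push_cast
  ring_nf

lemma Kset_mono {ω ϖ : ℕ} (h : ω ≤ ϖ) : Kset n ω ⊆ Kset n ϖ := by
  intro k
  simp only [Kset, Set.mem_ofPred_eq]
  omega

lemma Pgeq_apply (s z : EuclideanSpace ℝ (Fin n)) (j : Fin n) : Pgeq n s z j = max (z j) |s j| :=
  rfl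

lemma Pband_apply (ϖ : ℕ) (z : EuclideanSpace ℝ (Fin n)) (j : Fin n) :
    Pband n ϖ z j = (n : ℝ)⁻¹ *
      ∑ k ∈ univ.filter (fun k : Fin n => (k : ℕ) ≤ ϖ - 1 ∨ n - ϖ + 1 ≤ (k : ℕ)),
        (dft n z k * expFrac n (j * k)).re := by
  simp only [Pband, WithLp.equiv_symm_apply, PiLp.toLp_apply, one_div]
  congr 1
  refine sum_congr rfl fun k _ => ?_
  rw [dft, sum_mul, re_sum]
  refine sum_congr rfl fun l _ => ?_
  conv_rhs => rw [mul_assoc, ← expFrac_add, re_ofReal_mul, expFrac_re]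
  congr 2
  push_cast
  ring

variable [NeZero n]

lemma expFrac_eq_one_iff (r : ℤ) : expFrac n r = 1 ↔ (n : ℤ) ∣ r := by
  rw [expFrac_eq_zpow, ← (isPrimitiveRoot_exp n (NeZero.ne n)).zpow_eq_one_iff_dvd, mul_comm]

lemma expFrac_congr {r s : ℤ} (h : r ≡ s [ZMOD n]) : expFrac n r = expFrac n s := by
  rw [← sub_add_cancel r s, expFrac_add, (expFrac_eq_one_iff _).2 h.symm.dvd, one_mul]

lemma sum_expFrac_mul (r : ℤ) :
    ∑ k : Fin n, expFrac n (k * r) = if (n : ℤ) ∣ r then (n : ℂ) else 0 := by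
  split_ifs with h
  · simp [(expFrac_eq_one_iff _).2 (h.mul_left _)]
  · have hpow : ∀ k : ℕ, expFrac n (k * r) = expFrac n r ^ k := fun k => by
      rw [expFrac_eq_zpow, expFrac_eq_zpow, ← zpow_natCast, ← zpow_mul, mul_comm r]
    have hne : expFrac n r ≠ 1 := mt (expFrac_eq_one_iff r).1 h
    have hroot : expFrac n r ^ n = 1 := by
      rw [← hpow, expFrac_eq_one_iff]
      exact dvd_mul_right _ _
    rw [Fin.sum_univ_eq_sum_range (fun k => expFrac n (k * r)), sum_congr rfl fun k _ => hpow k,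
      geom_sum_eq hne, hroot, sub_self, zero_div]

lemma dft_congr (z : Fin n → ℝ) {k k' : ℤ} (h : k ≡ k' [ZMOD n]) : dft n z k = dft n z k' := by
  refine sum_congr rfl fun j _ => ?_
  rw [expFrac_congr ((h.mul_left _).neg)]

lemma dft_inversion (z : Fin n → ℝ) (j : Fin n) :
    (n : ℂ)⁻¹ * ∑ k : Fin n, dft n z k * expFrac n (j * k) = z j := by
  have hdelta : ∀ l : Fin n, ∑ k : Fin n, expFrac n (k * ((j : ℤ) - l)) =
      if l = j then (n : ℂ) else 0 := by
    intro l
    rw [sum_expFrac_mul]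
    refine if_congr ⟨fun h => Fin.ext ?_, fun h => by simp [h]⟩ rfl rfl
    have := Int.eq_zero_of_abs_lt_dvd h (by rw [abs_lt]; omega)
    omega
  have hswap : ∑ k : Fin n, dft n z k * expFrac n (j * k) =
      ∑ l : Fin n, (z l : ℂ) * ∑ k : Fin n, expFrac n (k * ((j : ℤ) - l)) := by
    simp only [dft, sum_mul, mul_sum]
    rw [sum_comm]
    refine sum_congr rfl fun l _ => sum_congr rfl fun k _ => ?_
    rw [mul_assoc, ← expFrac_add]
    ring_nf
  simp only [hswap, hdelta, mul_ite, mul_zero, sum_ite_eq', mem_univ, if_true]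
  field_simp [NeZero.ne n]

lemma dft_mul (m d : Fin n → ℝ) (k : ℤ) :
    dft n (m * d) k = (n : ℂ)⁻¹ * ∑ t : Fin n, dft n d t * dft n m (k - t) := by
  have hd : ∀ l, (d l : ℂ) = (n : ℂ)⁻¹ * ∑ t : Fin n, dft n d t * expFrac n (l * t) :=
    fun l => (dft_inversion d l).symm
  calc dft n (m * d) k
      = ∑ l : Fin n, (m l : ℂ) * ((n : ℂ)⁻¹ * ∑ t : Fin n, dft n d t * expFrac n (l * t)) *
          expFrac n (-(l * k)) := by
        refine sum_congr rfl fun l _ => ?_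
        rw [Pi.mul_apply, Complex.ofReal_mul, ← hd]
    _ = (n : ℂ)⁻¹ * ∑ t : Fin n, dft n d t * dft n m (k - t) := by
        have hm : ∀ t : ℤ, dft n m (k - t) =
            ∑ l : Fin n, (m l : ℂ) * expFrac n (-(l * (k - t))) := fun _ => rfl
        simp only [hm, mul_sum, sum_mul]
        rw [sum_comm]
        refine sum_congr rfl fun t _ => sum_congr rfl fun l _ => ?_
        rw [show -((l : ℤ) * (k - t)) = l * t + -(l * k) by ring, expFrac_add]
        ring

lemma val_add_ofNat_modEq (j : Fin n) (p : ℕ) :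
    (((j + Fin.ofNat n p : Fin n) : ℕ) : ℤ) ≡ j + p [ZMOD n] := by
  have h : ((j + Fin.ofNat n p : Fin n) : ℕ) ≡ j + p [MOD n] := by
    rw [Fin.val_add, Fin.val_ofNat]
    exact (Nat.mod_modEq _ n).trans ((Nat.mod_modEq p n).add_left _)
  exact_mod_cast Int.natCast_modEq_iff.2 h

lemma dft_eq_zero_of_periodic {ν p : ℕ} (hp : n = ν * p) {z : Fin n → ℝ}
    (hz : ∀ j, z (j + Fin.ofNat n p) = z j) {k : ℤ} (hk : ¬ (ν : ℤ) ∣ k) : dft n z k = 0 := by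
  have hshift : dft n z k = expFrac n (-(p * k)) * dft n z k := by
    conv_lhs => rw [dft, ← Equiv.sum_comp (Equiv.addRight (Fin.ofNat n p))]
    rw [dft, mul_sum]
    refine sum_congr rfl fun j _ => ?_
    rw [Equiv.coe_addRight, hz, mul_left_comm, ← expFrac_add]
    congr 1
    apply expFrac_congr
    have := ((val_add_ofNat_modEq j p).mul_right k).neg
    convert this using 1
    ring
  have hp0 : (p : ℤ) ≠ 0 := by
    have := NeZero.ne n
    rw [hp] at this
    exact_mod_cast right_ne_zero_of_mul this
  have hne : expFrac n (-(p * k)) ≠ 1 := by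
    rw [Ne, expFrac_eq_one_iff, dvd_neg, hp, Nat.cast_mul, mul_comm (ν : ℤ),
      mul_dvd_mul_iff_left hp0]
    exact hk
  have : (1 - expFrac n (-(p * k))) * dft n z k = 0 := by linear_combination hshift
  exact (mul_eq_zero.1 this).resolve_left (sub_ne_zero.2 (Ne.symm hne))

lemma periodic_of_dft_eq_zero {ν p : ℕ} (hp : n = ν * p) {z : Fin n → ℝ}
    (hz : ∀ k : Fin n, ¬ ν ∣ (k : ℕ) → dft n z k = 0) (j : Fin n) :
    z (j + Fin.ofNat n p) = z j := by
  have hterm : ∀ k : Fin n, dft n z k * expFrac n ((j + Fin.ofNat n p : Fin n) * k) =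
      dft n z k * expFrac n (j * k) := by
    intro k
    by_cases hk : ν ∣ (k : ℕ)
    · obtain ⟨a, ha⟩ := hk
      congr 1
      apply expFrac_congr
      refine ((val_add_ofNat_modEq j p).mul_right _).trans ?_
      have hpk : (p : ℤ) * k ≡ 0 [ZMOD n] :=
        (Int.modEq_zero_iff_dvd).2 ⟨a, by rw [ha, hp]; push_cast; ring⟩
      simpa [add_mul] using (Int.ModEq.refl ((j : ℤ) * k)).add hpk
    · rw [hz k hk, zero_mul, zero_mul]
  have h := dft_inversion z (j + Fin.ofNat n p)
  rw [sum_congr rfl fun k _ => hterm k, dft_inversion] at h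
  exact_mod_cast h.symm

lemma dft_eq_zero_of_mem_Sband {ω : ℕ} {m : EuclideanSpace ℝ (Fin n)} (hm : m ∈ Sband n ω)
    {x : ℤ} (hx : ∀ r : Fin n, (r : ℤ) ≡ x [ZMOD n] → r ∉ Kset n ω) : dft n m x = 0 := by
  have hn : (0 : ℤ) < n := by exact_mod_cast Nat.pos_of_ne_zero (NeZero.ne n)
  have h0 := Int.emod_nonneg x hn.ne'
  have hlt := Int.emod_lt_of_pos x hn
  let r : Fin n := ⟨(x % n).toNat, by omega⟩
  have hr : (r : ℤ) ≡ x [ZMOD n] := by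
    rw [show ((r : ℕ) : ℤ) = x % n by simp [r, h0]]
    exact Int.mod_modEq x n
  rw [dft_congr _ hr.symm, ← sum_mul_exp_eq_dft]
  exact hm r (hx r hr)

lemma sub_notMem_Kset {ω ϖ ν : ℕ} (hω : 1 ≤ ω) (hωϖ : ω ≤ ϖ) (hν : ϖ + ω - 1 ≤ ν)
    (hνn : ν ∣ n) {k t r : Fin n} (hk : k ∈ Kset n ϖ) (ht : t ≠ 0) (hνt : ν ∣ (t : ℕ))
    (hr : (r : ℤ) ≡ k - t [ZMOD n]) : r ∉ Kset n ω := by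
  have ht0 : 0 < (t : ℕ) := Nat.pos_of_ne_zero (Fin.val_ne_iff.2 ht)
  have htν : ν ≤ t := Nat.le_of_dvd ht0 hνt
  have hνnt : ν ≤ n - t := Nat.le_of_dvd (by omega) (Nat.dvd_sub hνn hνt)
  obtain ⟨c, hc⟩ := hr.symm.dvd
  have hc' : c = 0 ∨ c = 1 := by
    have : ((t : ℕ) : ℤ) < n := by exact_mod_cast t.isLt
    have : ((r : ℕ) : ℤ) < n := by exact_mod_cast r.isLt
    have : ((k : ℕ) : ℤ) < n := by exact_mod_cast k.isLt
    rcases lt_trichotomy c 1 with h | h | h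
    · left; nlinarith
    · right; exact h
    · exfalso; nlinarith
  simp only [Kset, Set.mem_ofPred_eq] at hk ⊢
  rcases hc' with rfl | rfl <;> omega

lemma Pband_mul_of_periodic {ω ϖ ν p : ℕ} (hω : 1 ≤ ω) (hωϖ : ω ≤ ϖ) (hν : ϖ + ω - 1 ≤ ν)
    (hp : n = ν * p) {m : EuclideanSpace ℝ (Fin n)} (hm : m ∈ Sband n ω) {d : Fin n → ℝ}
    (hd : ∀ j, d (j + Fin.ofNat n p) = d j) {z : EuclideanSpace ℝ (Fin n)}
    (hz : ∀ j, z j = m j * d j) (j : Fin n) : Pband n ϖ z j = (𝔼 l, d l) * m j := by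
  set μ : ℝ := 𝔼 l, d l
  have hdft : ∀ k : Fin n, k ∈ Kset n ϖ → dft n z k = μ * dft n m k := by
    intro k hk
    rw [show (z : Fin n → ℝ) = m * d from funext hz, dft_mul, sum_eq_single 0]
    · simp only [μ, Fin.val_zero, Nat.cast_zero, dft_zero, sub_zero, expect_eq_sum_div_card,
        card_univ, Fintype.card_fin]
      push_cast
      ring
    · intro t _ ht
      by_cases hνt : ν ∣ (t : ℕ)
      · rw [dft_eq_zero_of_mem_Sband hm
          fun r hr => sub_notMem_Kset hω hωϖ hν ⟨p, hp⟩ hk ht hνt hr, mul_zero]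
      · rw [dft_eq_zero_of_periodic hp hd (by exact_mod_cast hνt), zero_mul]
    · simp
  have hm0 : ∀ k : Fin n, k ∉ Kset n ϖ → dft n m k = 0 := fun k hk => by
    rw [← sum_mul_exp_eq_dft]
    exact hm k fun h => hk (Kset_mono hωϖ h)
  have hinv : ∑ k : Fin n, dft n m k * expFrac n (j * k) = n * (m j : ℂ) := by
    rw [← dft_inversion m j, mul_inv_cancel_left₀ (Nat.cast_ne_zero.2 (NeZero.ne n))]
  calc Pband n ϖ z j
      = (n : ℝ)⁻¹ * ∑ k : Fin n, (μ * (dft n m k * expFrac n (j * k))).re := by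
        rw [Pband_apply, sum_filter]
        refine congrArg _ (sum_congr rfl fun k _ => ?_)
        split_ifs with hk
        · rw [hdft k hk, mul_assoc]
        · rw [hm0 k hk]
          simp
    _ = μ * m j := by
        rw [← re_sum, ← mul_sum, hinv]
        simp only [← Complex.ofReal_natCast, ← Complex.ofReal_mul, Complex.ofReal_re]
        field_simp [NeZero.ne n]

end APB

open APB

theorem APB_converges_to_true_modulator_general
    (n ω ϖ ν : ℕ) (hω : 1 ≤ ω) (hωϖ : ω ≤ ϖ)
    (hν : ν ∣ n) (hνge : ϖ + ω - 1 ≤ ν)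
    (msig : EuclideanSpace ℝ (Fin n)) (hmsig : msig ∈ Mmod n ω)
    (c : EuclideanSpace ℝ (Fin n))
    (hc : ∀ j, |c j| ≤ 1) (hc1 : ∃ j, |c j| = 1)
    (hcdft : ∀ k : Fin n, ¬ (ν ∣ (k : ℕ)) →
      ∑ j : Fin n, ((|c j| : ℝ) : ℂ) *
        Complex.exp (-(2 * (Real.pi : ℂ) * Complex.I * ((j : ℕ) : ℂ) * ((k : ℕ) : ℂ)) / (n : ℂ)) = 0)
    (s : EuclideanSpace ℝ (Fin n)) (hs : ∀ j, s j = msig j * c j)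
    (mseq : ℕ → EuclideanSpace ℝ (Fin n))
    (hm0 : ∀ j, mseq 0 j = |s j|)
    (hms : ∀ i, mseq (i + 1) = Pgeq n s (Pband n ϖ (mseq i))) :
    Filter.Tendsto mseq Filter.atTop (nhds msig) := by
  obtain ⟨j₀, hj₀⟩ := hc1
  have : NeZero n := ⟨j₀.pos.ne'⟩
  obtain ⟨p, hp⟩ := hν
  set a : Fin n → ℝ := fun j => |c j|
  have ha : ∀ j, a (j + Fin.ofNat n p) = a j :=
    periodic_of_dft_eq_zero hp fun k hk => by rw [← sum_mul_exp_eq_dft]; exact hcdft k hk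
  have hseq : ∀ i j, mseq i j = msig j * envelope a i j := by
    intro i
    induction i with
    | zero => intro j; rw [hm0, hs, abs_mul, abs_of_nonneg (hmsig.2 j)]; rfl
    | succ i ih =>
      intro j
      rw [hms, Pgeq_apply, Pband_mul_of_periodic hω hωϖ hνge hp hmsig.1
        (envelope_comp (σ := (· + Fin.ofNat n p)) ha i) ih, hs, abs_mul,
        abs_of_nonneg (hmsig.2 j), envelope_succ_apply, mul_max_of_nonneg _ _ (hmsig.2 j),
        mul_comm]
  have hlim : ∀ j, Tendsto (fun i => mseq i j) atTop (𝓝 (msig j)) := fun j => by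
    simpa only [hseq, mul_one] using
      (tendsto_envelope (fun j => abs_nonneg (c j)) hc hj₀ j).const_mul (msig j)
  exact (PiLp.homeomorph 2 _).isInducing.tendsto_nhds_iff.2 (tendsto_pi_nhds.2 hlim)

/-- if `|c|` has its DFT supported on multiples of a divisor `ν ≥ ϖ + ω − 1`
of `n`, `|c_j| ≤ 1` everywhere with equality somewhere, then the AP-B iteration started
from `|s|`, `s = m ∘ c`, converges to the true modulator `m`. -/
theorem APB_converges_to_true_modulator
    (n ω ϖ ν : ℕ) (hn : 1 ≤ n) (hω : 1 ≤ ω) (hωϖ : ω ≤ ϖ) (h2ϖ : 2 * ϖ - 1 ≤ n)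
    (hν : ν ∣ n) (hνge : ϖ + ω - 1 ≤ ν)
    (msig : EuclideanSpace ℝ (Fin n)) (hmsig : msig ∈ Mmod n ω)
    (c : EuclideanSpace ℝ (Fin n))
    (hc : ∀ j, |c j| ≤ 1) (hc1 : ∃ j, |c j| = 1)
    (hcdft : ∀ k : Fin n, ¬ (ν ∣ (k : ℕ)) →
      ∑ j : Fin n, ((|c j| : ℝ) : ℂ) *
        Complex.exp (-(2 * (Real.pi : ℂ) * Complex.I * ((j : ℕ) : ℂ) * ((k : ℕ) : ℂ)) / (n : ℂ)) = 0)
    (s : EuclideanSpace ℝ (Fin n)) (hs : ∀ j, s j = msig j * c j)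
    (mseq : ℕ → EuclideanSpace ℝ (Fin n))
    (hm0 : ∀ j, mseq 0 j = |s j|)
    (hms : ∀ i, mseq (i + 1) = Pgeq n s (Pband n ϖ (mseq i))) :
    Filter.Tendsto mseq Filter.atTop (nhds msig) :=
  APB_converges_to_true_modulator_general n ω ϖ ν hω hωϖ hν hνge msig hmsig c hc hc1 hcdft s hs mseq
    hm0 hms
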